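/- Fix d ∈ (−1,1), β > 0, α₁, α₂, ã, L > 0 and γ ≥ 0. The value function Ĵ is weighted homogeneous of degree 2: for every κ > 0 and all (z₁,z₂,ν,δ) ∈ ℝ⁴, Ĵ(κ^{1−d}·z₁, κ·z₂, κ^{1−d}·ν, κ^{1+d}·δ; γ, L) = κ² · Ĵ(z₁,z₂,ν,δ; γ, L). -/
import Mathlib


/-- Sign-preserving power `⌊x⌉^p = sign(x)·|x|^p`. -/
noncomputable def spow (x p : ℝ) : ℝ := Real.sign x * |x| ^ p

/-- The value function `Ĵ(z₁,z₂,ν,δ; γ, L)` of the homogeneous differential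
dissipation inequality for the second-order homogeneous differentiator. -/
noncomputable def Jhat (d β α1 α2 a L γ z1 z2 ν δ : ℝ) : ℝ :=
  a * (-α1 * (spow z1 (1/(1-d)) - z2) * (spow (z1 + ν) (1/(1-d)) - z2)
        + (-z1 + (1 + β) * spow z2 (1 - d)) *
            (-(α2 / α1) * spow (z1 + ν) ((1+d)/(1-d)) + δ / (L ^ 2 * α1)))
    + α1 ^ 2 * z2 ^ 2 - (γ / L) ^ 2 * (|ν| ^ (2/(1-d)) + |δ| ^ (2/(1+d)))

lemma spow_pos_mul (c x p : ℝ) (hc : 0 < c) : spow (c * x) p = c ^ p * spow x p := by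
  unfold spow
  rw [abs_mul, abs_of_pos hc, Real.mul_rpow hc.le (abs_nonneg x)]
  rcases lt_trichotomy x 0 with h | h | h
  · rw [Real.sign_of_neg h, Real.sign_of_neg (by nlinarith)]; ring
  · simp [h]
  · rw [Real.sign_of_pos h, Real.sign_of_pos (by positivity)]; ring

/-- The value function `Ĵ` is weighted homogeneous of degree 2 in `(z₁,z₂,ν,δ)`
with weights `(1-d, 1, 1-d, 1+d)`. -/
theorem stmt12 (d β α1 α2 a L γ : ℝ) (hd : d ∈ Set.Ioo (-1:ℝ) 1) (hβ : 0 < β)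
    (hα1 : 0 < α1) (hα2 : 0 < α2) (ha : 0 < a) (hL : 0 < L) (hγ : 0 ≤ γ) :
    ∀ κ > (0:ℝ), ∀ z1 z2 ν δ : ℝ,
      Jhat d β α1 α2 a L γ (κ ^ (1-d) * z1) (κ * z2) (κ ^ (1-d) * ν) (κ ^ (1+d) * δ)
        = κ ^ (2:ℝ) * Jhat d β α1 α2 a L γ z1 z2 ν δ := by
  intro κ hκ z1 z2 ν δ
  obtain ⟨hd1, hd2⟩ := hd
  have h1d : (1 - d) ≠ 0 := sub_ne_zero.mpr (ne_of_lt hd2).symm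
  have h1d' : (1 + d) ≠ 0 := by linarith
  have hκd : (0:ℝ) < κ ^ (1-d) := Real.rpow_pos_of_pos hκ _
  have e1 : (κ ^ (1-d)) ^ (1/(1-d)) = κ := by
    rw [← Real.rpow_mul hκ.le, mul_one_div, div_self h1d, Real.rpow_one]
  have e2 : (κ ^ (1-d)) ^ ((1+d)/(1-d)) = κ ^ (1+d) := by
    rw [← Real.rpow_mul hκ.le, mul_div_cancel₀ _ h1d]
  have e3 : (κ ^ (1-d)) ^ (2/(1-d)) = κ ^ (2:ℝ) := by
    rw [← Real.rpow_mul hκ.le, mul_div_cancel₀ _ h1d]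
  have e4 : (κ ^ (1+d)) ^ (2/(1+d)) = κ ^ (2:ℝ) := by
    rw [← Real.rpow_mul hκ.le, mul_div_cancel₀ _ h1d']
  have e5 : κ ^ (1-d) * κ ^ (1+d) = κ ^ (2:ℝ) := by
    rw [← Real.rpow_add hκ]; norm_num
  have e6 : κ * κ = κ ^ (2:ℝ) := by
    rw [show (2:ℝ) = ((2:ℕ):ℝ) by norm_num, Real.rpow_natCast]; ring
  have hκ1d : (0:ℝ) < κ ^ (1+d) := Real.rpow_pos_of_pos hκ _
  have s1 : spow (κ ^ (1-d) * z1) (1/(1-d)) = κ * spow z1 (1/(1-d)) := by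
    rw [spow_pos_mul _ _ _ hκd, e1]
  have s2 : κ ^ (1-d) * z1 + κ ^ (1-d) * ν = κ ^ (1-d) * (z1 + ν) := by ring
  have s3 : spow (κ ^ (1-d) * (z1 + ν)) (1/(1-d)) = κ * spow (z1 + ν) (1/(1-d)) := by
    rw [spow_pos_mul _ _ _ hκd, e1]
  have s4 : spow (κ ^ (1-d) * (z1 + ν)) ((1+d)/(1-d))
      = κ ^ (1+d) * spow (z1 + ν) ((1+d)/(1-d)) := by
    rw [spow_pos_mul _ _ _ hκd, e2]
  have s5 : spow (κ * z2) (1-d) = κ ^ (1-d) * spow z2 (1-d) := by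
    rw [spow_pos_mul _ _ _ hκ]
  have s6 : |κ ^ (1-d) * ν| ^ (2/(1-d)) = κ ^ (2:ℝ) * |ν| ^ (2/(1-d)) := by
    rw [abs_mul, abs_of_pos hκd, Real.mul_rpow hκd.le (abs_nonneg ν), e3]
  have s7 : |κ ^ (1+d) * δ| ^ (2/(1+d)) = κ ^ (2:ℝ) * |δ| ^ (2/(1+d)) := by
    rw [abs_mul, abs_of_pos hκ1d, Real.mul_rpow hκ1d.le (abs_nonneg δ), e4]
  unfold Jhat
  rw [s2, s1, s3, s4, s5, s6, s7, ← e6]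
  have e5' : κ ^ (1-d) * κ ^ (1+d) = κ * κ := by rw [e5, ← e6]
  linear_combination (a * (-z1 + (1 + β) * spow z2 (1 - d)) *
    (-(α2 / α1) * spow (z1 + ν) ((1+d)/(1-d)) + δ / (L ^ 2 * α1))) * e5'
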